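/- The degree of the Grassmannian $\mathrm{G}(k,n)$ of $k$-planes in $\mathbb{C}^n$ in its Plücker embedding is $\frac{(k(n-k))!}{\prod_{j=1}^k j(j+1)\cdots(j+n-k-1)}$, and this number is a positive integer. -/

import Mathlib

open Finset Nat

-- core: for u < q, r < q : ∑_{i<r} (u+i)/q ≤ u*r/q
lemma core_ineq {q u r : ℕ} (hq : 0 < q) (hu : u < q) (hr : r < q) :
    ∑ i ∈ range r, (u + i) / q ≤ u * r / q := by
  have hterm : ∀ i ∈ range r, (u + i) / q = if q ≤ u + i then 1 else 0 := by
    intro i hi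
    have hi' : i < r := mem_range.mp hi
    have h2 : u + i < 2 * q := by omega
    have hlt : (u + i) / q < 2 := (Nat.div_lt_iff_lt_mul hq).mpr h2
    rcases le_or_gt q (u + i) with h | h
    · have h1 : 1 ≤ (u + i) / q := (Nat.one_le_div_iff hq).mpr h
      simp only [if_pos h]; omega
    · simp [Nat.div_eq_of_lt h, Nat.not_le.mpr h]
  rw [Finset.sum_congr rfl hterm, ← Finset.card_filter]
  have hset : (range r).filter (fun i => q ≤ u + i) = Finset.Ico (q - u) r := by
    ext i; simp [Finset.mem_Ico]; omega
  rw [hset, Nat.card_Ico]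
  rw [Nat.le_div_iff_mul_le hq]
  rcases le_or_gt (q - u) r with h | h
  · have : (r - (q - u)) * q = r * q - (q - u) * q := by rw [Nat.sub_mul]
    rw [this]
    have key : r * q + u * q ≤ u * r + q * q := by nlinarith [Nat.sub_add_cancel hu.le, Nat.sub_add_cancel hr.le, Nat.mul_le_mul_left q (Nat.zero_le ((q-u)*(q-r)))]
    have h1 : (q - u) * q = q * q - u * q := by rw [Nat.sub_mul]
    omega
  · simp [Nat.sub_eq_zero_of_le h.le]

-- shift: for r < q : ∑_{j<a} (r+j)/q = ∑_{j<a} j/q + ∑_{i<r} (a+i)/q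
lemma shift_sum {q r : ℕ} (a : ℕ) (hr : r < q) :
    ∑ j ∈ range a, (r + j) / q = (∑ j ∈ range a, j / q) + ∑ i ∈ range r, (a + i) / q := by
  have h1 : ∑ j ∈ range a, (r + j) / q = ∑ j ∈ Finset.Ico r (r + a), j / q := by
    rw [Finset.sum_Ico_eq_sum_range]; simp
  have h2 : ∑ j ∈ Finset.Ico 0 (r + a), j / q
      = (∑ j ∈ Finset.Ico 0 r, j / q) + ∑ j ∈ Finset.Ico r (r + a), j / q :=
    (Finset.sum_Ico_consecutive _ (Nat.zero_le r) (Nat.le_add_right r a)).symm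
  have h3 : ∑ j ∈ Finset.Ico 0 r, j / q = 0 := by
    apply Finset.sum_eq_zero; intro j hj
    exact Nat.div_eq_of_lt (lt_trans (Finset.mem_Ico.mp hj).2 hr)
  have h4 : ∑ j ∈ Finset.Ico 0 (r + a), j / q
      = (∑ j ∈ Finset.Ico 0 a, j / q) + ∑ j ∈ Finset.Ico a (a + r), j / q := by
    rw [Nat.add_comm r a]
    exact (Finset.sum_Ico_consecutive _ (Nat.zero_le a) (Nat.le_add_right a r)).symm
  have h5 : ∑ j ∈ Finset.Ico a (a + r), j / q = ∑ i ∈ range r, (a + i) / q := by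
    rw [Finset.sum_Ico_eq_sum_range]; simp
  have h6 : (∑ j ∈ range a, j / q) = ∑ j ∈ Finset.Ico 0 a, j / q := by
    rw [Finset.range_eq_Ico]
  rw [h1, h6, ← h5]
  omega

-- key: for q > 0 : ∑_{j<a} (b+j)/q ≤ a*b/q + ∑_{j<a} j/q
lemma key_ineq {q : ℕ} (hq : 0 < q) (a b : ℕ) :
    ∑ j ∈ range a, (b + j) / q ≤ a * b / q + ∑ j ∈ range a, j / q := by
  obtain ⟨s, r, hb, hr⟩ : ∃ s r, b = q * s + r ∧ r < q :=
    ⟨b / q, b % q, (Nat.div_add_mod b q).symm, Nat.mod_lt b hq⟩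
  have h1 : ∀ j, (b + j) / q = s + (r + j) / q := by
    intro j
    rw [hb]
    rw [show q * s + r + j = r + j + s * q by ring, Nat.add_mul_div_right _ _ hq, Nat.add_comm]
  have h2 : a * b / q = a * s + a * r / q := by
    rw [hb, show a * (q * s + r) = a * r + (a * s) * q by ring, Nat.add_mul_div_right _ _ hq,
      Nat.add_comm]
  simp only [h1, Finset.sum_add_distrib, Finset.sum_const, Finset.card_range, smul_eq_mul, h2]
  rw [shift_sum a hr]
  have := core_ineq hq (show a % q < q from Nat.mod_lt a hq) hr
  -- need: ∑_{i<r}(a+i)/q ≤ a*r/q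
  have hcore : ∑ i ∈ range r, (a + i) / q ≤ a * r / q := by
    obtain ⟨t, u, ha, hu⟩ : ∃ t u, a = q * t + u ∧ u < q :=
      ⟨a / q, a % q, (Nat.div_add_mod a q).symm, Nat.mod_lt a hq⟩
    have h3 : ∀ i, (a + i) / q = t + (u + i) / q := by
      intro i
      rw [ha, show q * t + u + i = u + i + t * q by ring, Nat.add_mul_div_right _ _ hq,
        Nat.add_comm]
    have h4 : a * r / q = t * r + u * r / q := by
      rw [ha, show (q * t + u) * r = u * r + (t * r) * q by ring, Nat.add_mul_div_right _ _ hq,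
        Nat.add_comm]
    simp only [h3, Finset.sum_add_distrib, Finset.sum_const, Finset.card_range, smul_eq_mul, h4]
    have := core_ineq hq hu hr
    have : t * r = r * t := Nat.mul_comm t r
    omega
  omega

lemma prod_fact_dvd (a b : ℕ) :
    (∏ j ∈ range a, (j + b)!) ∣ (a * b)! * ∏ j ∈ range a, j ! := by
  have hP : (∏ j ∈ range a, (j + b)!) ≠ 0 :=
    Finset.prod_ne_zero_iff.mpr fun j _ => (Nat.factorial_pos _).ne'
  have hF : (∏ j ∈ range a, j !) ≠ 0 :=
    Finset.prod_ne_zero_iff.mpr fun j _ => (Nat.factorial_pos _).ne'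
  have hQ : (a * b)! * ∏ j ∈ range a, j ! ≠ 0 :=
    Nat.mul_ne_zero (Nat.factorial_pos _).ne' hF
  rw [← Nat.factorization_le_iff_dvd hP hQ, Finsupp.le_def]
  intro p
  by_cases hp : p.Prime
  · haveI : Fact p.Prime := ⟨hp⟩
    set B := a * b + a + b + 1 with hB
    have hlog : ∀ m : ℕ, m ≤ a * b + a + b → Nat.log p m < B := fun m hm =>
      lt_of_le_of_lt (Nat.log_le_self p m) (by omega)
    have hfact : ∀ m : ℕ, m ≤ a * b + a + b →
        (m !).factorization p = ∑ i ∈ Finset.Ico 1 B, m / p ^ i := fun m hm => by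
      rw [Nat.factorization_def _ hp, padicValNat_factorial (hlog m hm)]
    have hjb : ∀ j ∈ range a, j + b ≤ a * b + a + b := by
      intro j hj
      have := mem_range.mp hj
      omega
    rw [Nat.factorization_mul (Nat.factorial_pos _).ne' hF,
      Nat.factorization_prod (fun j _ => (Nat.factorial_pos _).ne'),
      Nat.factorization_prod (fun j _ => (Nat.factorial_pos _).ne')]
    rw [Finsupp.add_apply, Finset.sum_apply', Finset.sum_apply']
    calc ∑ j ∈ range a, ((j + b)!).factorization p
        = ∑ j ∈ range a, ∑ i ∈ Finset.Ico 1 B, (j + b) / p ^ i :=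
          Finset.sum_congr rfl fun j hj => hfact _ (hjb j hj)
      _ = ∑ i ∈ Finset.Ico 1 B, ∑ j ∈ range a, (j + b) / p ^ i := Finset.sum_comm
      _ ≤ ∑ i ∈ Finset.Ico 1 B, (a * b / p ^ i + ∑ j ∈ range a, j / p ^ i) := by
          apply Finset.sum_le_sum; intro i _
          have := key_ineq (pow_pos hp.pos i) a b
          simpa [Nat.add_comm] using this
      _ = (∑ i ∈ Finset.Ico 1 B, a * b / p ^ i) + ∑ i ∈ Finset.Ico 1 B, ∑ j ∈ range a, j / p ^ i := by
          rw [Finset.sum_add_distrib]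
      _ = ((a * b)!).factorization p + ∑ j ∈ range a, (j !).factorization p := by
          rw [hfact (a * b) (by omega), Finset.sum_comm]
          congr 1
          apply Finset.sum_congr rfl; intro j hj
          rw [hfact j (by have := mem_range.mp hj; omega)]
  · simp [Nat.factorization_eq_zero_of_not_prime _ hp]

lemma asc_prod (j b : ℕ) : j ! * ∏ m ∈ range b, (j + 1 + m) = (j + b)! := by
  induction b with
  | zero => simp
  | succ b ih =>
    rw [Finset.prod_range_succ, ← Nat.mul_assoc, ih, ← Nat.add_assoc, Nat.factorial_succ]
    ring

/-- The degree of the Grassmannian `G(k,n)` in its Plücker embedding,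
`(k(n-k))! / ∏_{j=1}^k j(j+1)⋯(j+n-k-1)`, is a positive integer. -/
theorem grassmannian_degree_integer (k n : ℕ) (hk : 1 ≤ k) (hkn : k ≤ n) :
    ∃ d : ℕ, 0 < d ∧
      Nat.factorial (k * (n - k))
        = d * ∏ j ∈ Finset.range k, ∏ m ∈ Finset.range (n - k), (j + 1 + m) := by
  set b := n - k with hb
  set D := ∏ j ∈ Finset.range k, ∏ m ∈ Finset.range b, (j + 1 + m) with hD
  set F := ∏ j ∈ range k, j ! with hF
  have hFpos : 0 < F := Finset.prod_pos fun j _ => Nat.factorial_pos j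
  have hFD : F * D = ∏ j ∈ range k, (j + b)! := by
    rw [hF, hD, ← Finset.prod_mul_distrib]
    exact Finset.prod_congr rfl fun j _ => asc_prod j b
  have hdvd : F * D ∣ F * (k * b)! := by
    rw [hFD, Nat.mul_comm F ((k * b)!)]
    exact prod_fact_dvd k b
  have hDdvd : D ∣ (k * b)! := (Nat.mul_dvd_mul_iff_left hFpos).mp hdvd
  obtain ⟨d, hd⟩ := hDdvd
  refine ⟨d, ?_, by rw [hd, Nat.mul_comm]⟩
  rcases Nat.eq_zero_or_pos d with h0 | h
  · exact absurd (hd.trans (by rw [h0, Nat.mul_zero])) (Nat.factorial_pos _).ne'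
  · exact h
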